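/- arXiv:2511.22391 — 2 statements merged into one kernel-verified Lean document; each statement's English description precedes it below -/
import Mathlib

section
/- The following elimination schemas are theorems of the proof system LEL: (ELM-TR) [x:=a]χ ↔ ([x:=a]⊥ ∨ χ), provided x∉FV(χ); (ELM-¬) [x:=a]¬φ ↔ ([x:=a]⊥ ∨ ¬[x:=a]φ); (ELM-∧) [x:=a](φ∧ψ) ↔ ([x:=a]φ ∧ [x:=a]ψ); (ELM-COM) [x:=a][y:=b]φ ↔ [y:=b][x:=a]φ, provided y≠x. -/
namespace SimplicialEpistemic

/-! ## Syntax -/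

inductive Formula (Ag Xv Pr : Type) : Type
  | atom : Pr → Xv → Formula Ag Xv Pr
  | top : Formula Ag Xv Pr
  | neg : Formula Ag Xv Pr → Formula Ag Xv Pr
  | and : Formula Ag Xv Pr → Formula Ag Xv Pr → Formula Ag Xv Pr
  | assign : Xv → Ag → Formula Ag Xv Pr → Formula Ag Xv Pr
  | know : Finset Xv → Formula Ag Xv Pr → Formula Ag Xv Pr

namespace Formula

variable {Ag Xv Pr : Type} [DecidableEq Xv]

/-- Free variables of a formula. -/
def FV : Formula Ag Xv Pr → Finset Xv
  | .atom _ x => {x}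
  | .top => ∅
  | .neg φ => FV φ
  | .and φ ψ => FV φ ∪ FV ψ
  | .assign x _ φ => FV φ \ {x}
  | .know Xs _ => Xs

/-- Well-formedness: in `K_X α`, the formula `α` must have no free variables.
The language `L` consists of the well-formed formulas. -/
def Wf : Formula Ag Xv Pr → Prop
  | .atom _ _ => True
  | .top => True
  | .neg φ => Wf φ
  | .and φ ψ => Wf φ ∧ Wf ψ
  | .assign _ _ φ => Wf φ
  | .know _ α => Wf α ∧ FV α = ∅

/-- A sentence is a well-formed formula with no free variables. -/
def Sent (φ : Formula Ag Xv Pr) : Prop := Wf φ ∧ FV φ = ∅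

/-- Implication `φ → ψ`, defined as `¬(φ ∧ ¬ψ)`. -/
def impl (φ ψ : Formula Ag Xv Pr) : Formula Ag Xv Pr := .neg (.and φ (.neg ψ))

/-- Biconditional `φ ↔ ψ`. -/
def fiff (φ ψ : Formula Ag Xv Pr) : Formula Ag Xv Pr := .and (impl φ ψ) (impl ψ φ)

/-- Disjunction `φ ∨ ψ`, defined as `¬(¬φ ∧ ¬ψ)`. -/
def fdisj (φ ψ : Formula Ag Xv Pr) : Formula Ag Xv Pr := .neg (.and (.neg φ) (.neg ψ))

/-- Falsum `⊥ := ¬⊤`. -/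
def fbot : Formula Ag Xv Pr := .neg .top

/-- The dual assignment operator `⟨x:=a⟩φ := ¬[x:=a]¬φ`. -/
def dia (x : Xv) (a : Ag) (φ : Formula Ag Xv Pr) : Formula Ag Xv Pr :=
  .neg (.assign x a (.neg φ))

/-- Finite conjunction of a list of formulas. -/
def bigAnd : List (Formula Ag Xv Pr) → Formula Ag Xv Pr
  | [] => .top
  | φ :: l => .and φ (bigAnd l)

/-- Iterated assignment `[x⃗:=a⃗]φ`. -/
def assigns : List Xv → List Ag → Formula Ag Xv Pr → Formula Ag Xv Pr
  | x :: xs, a :: as, φ => .assign x a (assigns xs as φ)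
  | _, _, φ => φ

/-- Substitution `φ[y/x]` of `y` for all free occurrences of `x` in `φ`. -/
def subst (x y : Xv) : Formula Ag Xv Pr → Formula Ag Xv Pr
  | .atom p z => .atom p (if z = x then y else z)
  | .top => .top
  | .neg φ => .neg (subst x y φ)
  | .and φ ψ => .and (subst x y φ) (subst x y ψ)
  | .assign z a φ => if z = x then .assign z a φ else .assign z a (subst x y φ)
  | .know Xs α => .know (Xs.image fun z => if z = x then y else z) α

/-- Admissibility of `φ[y/x]`: `x` has no free occurrence in `φ` within the scope
of `[y:=b]` for any `b`. -/
def Adm (x y : Xv) : Formula Ag Xv Pr → Prop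
  | .atom _ _ => True
  | .top => True
  | .neg φ => Adm x y φ
  | .and φ ψ => Adm x y φ ∧ Adm x y ψ
  | .assign z _ φ => z = x ∨ x ∉ FV φ ∨ (z ≠ y ∧ Adm x y φ)
  | .know _ _ => True

/-- `occurs y φ`: the variable `y` occurs (free or bound) in `φ`. -/
def occurs (y : Xv) : Formula Ag Xv Pr → Prop
  | .atom _ z => z = y
  | .top => False
  | .neg φ => occurs y φ
  | .and φ ψ => occurs y φ ∨ occurs y ψ
  | .assign z _ φ => z = y ∨ occurs y φ
  | .know Xs α => y ∈ Xs ∨ occurs y α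

/-- Propositional evaluation, treating atoms, assignment formulas and knowledge
formulas as propositional atoms. -/
def propEval (v : Formula Ag Xv Pr → Bool) : Formula Ag Xv Pr → Bool
  | .atom p x => v (.atom p x)
  | .top => true
  | .neg φ => !(propEval v φ)
  | .and φ ψ => propEval v φ && propEval v ψ
  | .assign x a φ => v (.assign x a φ)
  | .know Xs α => v (.know Xs α)

/-- `φ` is a propositional tautology. -/
def Tautology (φ : Formula Ag Xv Pr) : Prop := ∀ v, propEval v φ = true

end Formula

/-! ## Simplicial models and their semantics -/

structure SimpModel (Ag Pr : Type) : Type 1 where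
  V : Type
  faces : Set (Set V)
  χ : V → Ag
  ℓ : Pr → Set V

namespace SimpModel

variable {Ag Pr : Type}

/-- The facets: faces contained in no other face. -/
def facets (C : SimpModel Ag Pr) : Set (Set C.V) :=
  {F | F ∈ C.faces ∧ ∀ G ∈ C.faces, F ⊆ G → F = G}

/-- The conditions for being a genuine simplicial model. -/
def IsModel (C : SimpModel Ag Pr) : Prop :=
  Nonempty C.V ∧ (∅ : Set C.V) ∉ C.faces ∧
    (∀ Y F : Set C.V, Y.Nonempty → Y ⊆ F → F ∈ C.faces → Y ∈ C.faces) ∧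
    (∀ v : C.V, {v} ∈ C.faces) ∧
    (∀ F ∈ C.faces, Set.InjOn C.χ F)

end SimpModel

/-! ## First-order Kripke models and their semantics -/

structure KModel (Ag Pr : Type) : Type 1 where
  W : Type
  δ : W → Set Ag
  R : Ag → W → W → Prop
  ρ : Pr → W → Set Ag

namespace KModel

variable {Ag Pr : Type}

/-- The conditions for being a genuine first-order Kripke model. -/
def IsModel (M : KModel Ag Pr) : Prop :=
  Nonempty M.W ∧ (∀ w : M.W, (M.δ w).Nonempty) ∧
    (∀ (a : Ag) (w v : M.W), M.R a w v → a ∈ M.δ w) ∧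
    (∀ (p : Pr) (w : M.W), M.ρ p w ⊆ M.δ w)

end KModel

variable {Ag Xv Pr : Type}

/-- Simplicial satisfaction `C, F, σ ⊩ φ`. -/
def SSat [DecidableEq Xv] (C : SimpModel Ag Pr) :
    Formula Ag Xv Pr → Set C.V → (Xv → Ag) → Prop
  | .atom p x, F, σ => σ x ∈ C.χ '' (F ∩ C.ℓ p)
  | .top, _, _ => True
  | .neg φ, F, σ => ¬ SSat C φ F σ
  | .and φ ψ, F, σ => SSat C φ F σ ∧ SSat C ψ F σ
  | .assign x a φ, F, σ => a ∈ C.χ '' F → SSat C φ F (Function.update σ x a)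
  | .know Xs α, F, σ =>
      ∀ G ∈ C.facets, (∀ x ∈ Xs, σ x ∈ C.χ '' (F ∩ G)) → SSat C α G σ

/-- Kripke satisfaction `M, w, σ ⊨ φ`. -/
def KSat [DecidableEq Xv] (M : KModel Ag Pr) :
    Formula Ag Xv Pr → M.W → (Xv → Ag) → Prop
  | .atom p x, w, σ => σ x ∈ M.ρ p w
  | .top, _, _ => True
  | .neg φ, w, σ => ¬ KSat M φ w σ
  | .and φ ψ, w, σ => KSat M φ w σ ∧ KSat M ψ w σ
  | .assign x a φ, w, σ => a ∈ M.δ w → KSat M φ w (Function.update σ x a)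
  | .know Xs α, w, σ => ∀ v : M.W, (∀ x ∈ Xs, M.R (σ x) w v) → KSat M α v σ

/-! ## Bisimulations -/

/-- Bisimulation between simplicial models. -/
def IsSBisim (C D : SimpModel Ag Pr) (Z : Set (Set C.V × Set D.V)) : Prop :=
  (∀ q ∈ Z, q.1 ∈ C.facets ∧ q.2 ∈ D.facets) ∧
    ∀ F G, (F, G) ∈ Z →
      (C.χ '' F = D.χ '' G ∧ ∀ p : Pr, C.χ '' (F ∩ C.ℓ p) = D.χ '' (G ∩ D.ℓ p)) ∧
      (∀ (As : Set Ag) (F' : Set C.V), F' ∈ C.facets → As ⊆ C.χ '' (F ∩ F') →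
        ∃ G' ∈ D.facets, As ⊆ D.χ '' (G ∩ G') ∧ (F', G') ∈ Z) ∧
      (∀ (As : Set Ag) (G' : Set D.V), G' ∈ D.facets → As ⊆ D.χ '' (G ∩ G') →
        ∃ F' ∈ C.facets, As ⊆ C.χ '' (F ∩ F') ∧ (F', G') ∈ Z)

/-- Bisimulation between first-order Kripke models. -/
def IsKBisim (M N : KModel Ag Pr) (Z : Set (M.W × N.W)) : Prop :=
  ∀ w v, (w, v) ∈ Z →
    (M.δ w = N.δ v ∧ ∀ p : Pr, M.ρ p w = N.ρ p v) ∧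
    (∀ (As : Set Ag) (w' : M.W), (∀ a ∈ As, M.R a w w') →
      ∃ v' : N.W, (∀ a ∈ As, N.R a v v') ∧ (w', v') ∈ Z) ∧
    (∀ (As : Set Ag) (v' : N.W), (∀ a ∈ As, N.R a v v') →
      ∃ w' : M.W, (∀ a ∈ As, M.R a w w') ∧ (w', v') ∈ Z)

/-! ## Local epistemic models -/

/-- (Local S5): the restriction of `R_a` to `{w | a ∈ δ(w)}` is an equivalence relation. -/
def LocalS5 (M : KModel Ag Pr) : Prop :=
  ∀ a : Ag, Equivalence (fun w v : {w : M.W // a ∈ M.δ w} => M.R a w.1 v.1)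

/-- (Individually Increasing Domain). -/
def IndInc (M : KModel Ag Pr) : Prop :=
  ∀ (a : Ag) (w v : M.W), a ∈ M.δ w → M.R a w v → a ∈ M.δ v

/-- (Local Predicates). -/
def LocalPred (M : KModel Ag Pr) : Prop :=
  ∀ (p : Pr) (a : Ag) (w v : M.W), a ∈ M.ρ p w → M.R a w v → a ∈ M.ρ p v

/-- (Collectively Decreasing Domain). -/
def CollDec (M : KModel Ag Pr) : Prop :=
  ∀ w v : M.W, (∀ a ∈ M.δ w, M.R a w v) → M.δ v ⊆ M.δ w

/-- A local epistemic model. -/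
def IsLEM (M : KModel Ag Pr) : Prop :=
  LocalS5 M ∧ IndInc M ∧ LocalPred M ∧ CollDec M

/-- (Properness): `⋂_{a ∈ δ(w)} R_a(w) = {w}` for every `w`. -/
def Proper (M : KModel Ag Pr) : Prop :=
  ∀ w : M.W, {v : M.W | ∀ a ∈ M.δ w, M.R a w v} = {w}

/-! ## Properization -/

/-- `[w]_δ = ⋂_{a ∈ δ(w)} R_a(w)`. -/
def cell (M : KModel Ag Pr) (w : M.W) : Set M.W := {v | ∀ a ∈ M.δ w, M.R a w v}

/-- The properization `M^pr` of a Kripke model. -/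
noncomputable def properize (M : KModel Ag Pr) : KModel Ag Pr where
  W := {S : Set M.W // ∃ w : M.W, S = cell M w}
  δ := fun S => M.δ S.2.choose
  R := fun a S T => ∃ w v : M.W, S.1 = cell M w ∧ T.1 = cell M v ∧ M.R a w v
  ρ := fun p S => M.ρ p S.2.choose

/-! ## The maps LEM and SC -/

/-- `LEM(C)`: the first-order Kripke model associated to a simplicial model. -/
def LEMof (C : SimpModel Ag Pr) : KModel Ag Pr where
  W := {F : Set C.V // F ∈ C.facets}
  δ := fun F => C.χ '' F.1
  R := fun a F G => a ∈ C.χ '' (F.1 ∩ G.1)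
  ρ := fun p F => C.χ '' (F.1 ∩ C.ℓ p)

/-- Vertices of `SC(M)`: pairs `(a, [w]_a)` with `a ∈ δ(w)`, `[w]_a = R_a(w)`. -/
abbrev SCVert (M : KModel Ag Pr) : Type :=
  {u : Ag × Set M.W // ∃ w : M.W, u.1 ∈ M.δ w ∧ u.2 = {v : M.W | M.R u.1 w v}}

/-- `F^M_w = {(a, [w]_a) | a ∈ δ(w)}`. -/
def SCface (M : KModel Ag Pr) (w : M.W) : Set (SCVert M) :=
  {u | u.1.1 ∈ M.δ w ∧ u.1.2 = {v : M.W | M.R u.1.1 w v}}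

/-- `SC(M)`: the simplicial model associated to a Kripke model. -/
def SCof (M : KModel Ag Pr) : SimpModel Ag Pr where
  V := SCVert M
  faces := {F : Set (SCVert M) | F.Nonempty ∧ ∃ w : M.W, F ⊆ SCface M w}
  χ := fun u => u.1.1
  ℓ := fun p => {u | ∃ w : M.W, u.1.1 ∈ M.ρ p w ∧ u.1.2 = {v : M.W | M.R u.1.1 w v}}

/-! ## Isomorphisms -/

/-- Isomorphism of first-order Kripke models. -/
structure KIso (M N : KModel Ag Pr) where
  toEquiv : M.W ≃ N.W
  δ_eq : ∀ w : M.W, N.δ (toEquiv w) = M.δ w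
  R_iff : ∀ (a : Ag) (w v : M.W), N.R a (toEquiv w) (toEquiv v) ↔ M.R a w v
  ρ_eq : ∀ (p : Pr) (w : M.W), N.ρ p (toEquiv w) = M.ρ p w

/-- Isomorphism of simplicial models. -/
structure SIso (C D : SimpModel Ag Pr) where
  toEquiv : C.V ≃ D.V
  face_iff : ∀ F : Set C.V, F ∈ C.faces ↔ (toEquiv '' F) ∈ D.faces
  χ_eq : ∀ v : C.V, D.χ (toEquiv v) = C.χ v
  ℓ_iff : ∀ (p : Pr) (v : C.V), toEquiv v ∈ D.ℓ p ↔ v ∈ C.ℓ p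

/-! ## The proof system LEL -/

/-- The axiom system `LEL` (over the well-formed fragment of the language). -/
inductive LEL [DecidableEq Xv] : Formula Ag Xv Pr → Prop
  | taut {φ} : Formula.Wf φ → Formula.Tautology φ → LEL φ
  | kk {Xs : Finset Xv} {α β} : Formula.Sent α → Formula.Sent β →
      LEL (Formula.impl (.know Xs (Formula.impl α β))
        (Formula.impl (.know Xs α) (.know Xs β)))
  | mono {Xs Ys : Finset Xv} {α} : Xs ⊆ Ys → Formula.Sent α →
      LEL (Formula.impl (.know Xs α) (.know Ys α))
  | kasgn {x : Xv} {a : Ag} {φ ψ} : Formula.Wf φ → Formula.Wf ψ →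
      LEL (Formula.impl (.assign x a (Formula.impl φ ψ))
        (Formula.impl (.assign x a φ) (.assign x a ψ)))
  | det {x : Xv} {a : Ag} {φ} : Formula.Wf φ →
      LEL (Formula.impl (Formula.dia x a φ) (.assign x a φ))
  | tr {x : Xv} {a : Ag} {φ} : Formula.Wf φ → x ∉ Formula.FV φ →
      LEL (Formula.impl φ (.assign x a φ))
  | sub {x y : Xv} {a : Ag} {φ} : Formula.Wf φ → Formula.Adm x y φ →
      LEL (.assign y a (Formula.impl (.assign x a φ) (Formula.subst x y φ)))
  | com {x y : Xv} {a b : Ag} {φ} : Formula.Wf φ → x ≠ y →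
      LEL (Formula.impl (.assign x a (.assign y b φ)) (.assign y b (.assign x a φ)))
  | ui {x : Xv} {φ} (l : List Ag) : Formula.Wf φ → l.Nodup → (∀ a : Ag, a ∈ l) →
      LEL (Formula.impl (Formula.bigAnd (l.map fun a => .assign x a φ)) φ)
  | tK {Xs : Finset Xv} {α} : Formula.Sent α → LEL (Formula.impl (.know Xs α) α)
  | kni {xs : List Xv} {as : List Ag} {α} :
      Formula.Sent α → xs.Nodup → xs.length = as.length →
      LEL (Formula.assigns xs as (Formula.impl (.neg (.know xs.toFinset α))
        (.know xs.toFinset (Formula.assigns xs as (.neg (.know xs.toFinset α))))))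
  | epi {x : Xv} {a : Ag} : LEL (.assign x a (.know {x} (Formula.dia x a .top)))
  | api {x : Xv} {a : Ag} {p : Pr} :
      LEL (.assign x a (Formula.impl (.atom p x) (.know {x} (.assign x a (.atom p x)))))
  | eni {xs : List Xv} {as : List Ag} {z : Xv} (l : List Ag) :
      xs.Nodup → xs.length = as.length → l.Nodup → (∀ b : Ag, b ∈ l ↔ b ∉ as) →
      LEL (Formula.assigns xs as
        (Formula.impl (Formula.bigAnd (l.map fun b => .assign z b Formula.fbot))
          (.know xs.toFinset (Formula.bigAnd (l.map fun b => .assign z b Formula.fbot)))))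
  | mp {φ ψ} : LEL (Formula.impl φ ψ) → LEL φ → LEL ψ
  | necK {α} : Formula.Sent α → LEL α → LEL (.know ∅ α)
  | necA {x : Xv} {a : Ag} {φ} : LEL φ → LEL (.assign x a φ)

/-- `Γ` is consistent in `LEL`: no finite subset has a provably false conjunction. -/
def Consistent [DecidableEq Xv] (Γ : Set (Formula Ag Xv Pr)) : Prop :=
  ¬ ∃ l : List (Formula Ag Xv Pr), (∀ φ ∈ l, φ ∈ Γ) ∧ LEL (.neg (Formula.bigAnd l))

end SimplicialEpistemic

namespace SimplicialEpistemic

section Helpers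

variable {Ag Xv Pr : Type} [DecidableEq Xv]

open Formula

lemma wf_impl {φ ψ : Formula Ag Xv Pr} (h1 : Wf φ) (h2 : Wf ψ) : Wf (impl φ ψ) := ⟨h1, h2⟩

lemma wf_fbot : Wf (fbot : Formula Ag Xv Pr) := trivial

/-- Derived rule: distributing an assignment over a proven implication. -/
lemma asgK {x : Xv} {a : Ag} {φ ψ : Formula Ag Xv Pr} (hφ : Wf φ) (hψ : Wf ψ)
    (h : LEL (impl φ ψ)) : LEL (impl (.assign x a φ) (.assign x a ψ)) :=
  (LEL.kasgn hφ hψ).mp h.necA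

lemma taut_iff_intro {A B : Formula Ag Xv Pr} (hA : Wf A) (hB : Wf B)
    (h1 : LEL (impl A B)) (h2 : LEL (impl B A)) : LEL (fiff A B) := by
  have t : LEL (impl (impl A B) (impl (impl B A) (fiff A B))) := by
    apply LEL.taut
    · exact ⟨⟨hA, hB⟩, ⟨hB, hA⟩, ⟨⟨hA, hB⟩, hB, hA⟩⟩
    · intro v
      simp only [Formula.propEval, Formula.impl, Formula.fiff]
      cases propEval v A <;> cases propEval v B <;> simp
  exact (t.mp h1).mp h2

lemma taut_trans {A B C : Formula Ag Xv Pr} (hA : Wf A) (hB : Wf B) (hC : Wf C)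
    (h1 : LEL (impl A B)) (h2 : LEL (impl B C)) : LEL (impl A C) := by
  have t : LEL (impl (impl A B) (impl (impl B C) (impl A C))) := by
    apply LEL.taut
    · simp only [Formula.impl, Formula.Wf]; tauto
    · intro v
      simp only [Formula.propEval, Formula.impl]
      cases propEval v A <;> cases propEval v B <;> cases propEval v C <;> simp
  exact (t.mp h1).mp h2

lemma taut_and_intro {A B C : Formula Ag Xv Pr} (hA : Wf A) (hB : Wf B) (hC : Wf C)
    (h1 : LEL (impl A B)) (h2 : LEL (impl A C)) : LEL (impl A (.and B C)) := by
  have t : LEL (impl (impl A B) (impl (impl A C) (impl A (.and B C)))) := by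
    apply LEL.taut
    · simp only [Formula.impl, Formula.Wf]; tauto
    · intro v
      simp only [Formula.propEval, Formula.impl]
      cases propEval v A <;> cases propEval v B <;> cases propEval v C <;> simp
  exact (t.mp h1).mp h2

lemma taut_disj_elim {A B C : Formula Ag Xv Pr} (hA : Wf A) (hB : Wf B) (hC : Wf C)
    (h1 : LEL (impl A C)) (h2 : LEL (impl B C)) : LEL (impl (fdisj A B) C) := by
  have t : LEL (impl (impl A C) (impl (impl B C) (impl (fdisj A B) C))) := by
    apply LEL.taut
    · simp only [Formula.impl, Formula.fdisj, Formula.Wf]; tauto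
    · intro v
      simp only [Formula.propEval, Formula.impl, Formula.fdisj]
      cases propEval v A <;> cases propEval v B <;> cases propEval v C <;> simp
  exact (t.mp h1).mp h2

lemma taut_contra {A B : Formula Ag Xv Pr} (hA : Wf A) (hB : Wf B)
    (h1 : LEL (impl A B)) : LEL (impl (.neg B) (.neg A)) := by
  have t : LEL (impl (impl A B) (impl (.neg B) (.neg A))) := by
    apply LEL.taut
    · simp only [Formula.impl, Formula.Wf]; tauto
    · intro v
      simp only [Formula.propEval, Formula.impl]
      cases propEval v A <;> cases propEval v B <;> simp
  exact t.mp h1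

/-- From `A → (Q → E)` derive `Q → (E ∨ ¬A)`. -/
lemma taut_neg_case {A Q E : Formula Ag Xv Pr} (hA : Wf A) (hQ : Wf Q) (hE : Wf E)
    (h1 : LEL (impl A (impl Q E))) : LEL (impl Q (fdisj E (.neg A))) := by
  have t : LEL (impl (impl A (impl Q E)) (impl Q (fdisj E (.neg A)))) := by
    apply LEL.taut
    · simp only [Formula.impl, Formula.fdisj, Formula.Wf]; tauto
    · intro v
      simp only [Formula.propEval, Formula.impl, Formula.fdisj]
      cases propEval v A <;> cases propEval v Q <;> cases propEval v E <;> simp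
  exact t.mp h1

/-- From `¬C → D` and `D → (A → E)` derive `A → (E ∨ C)`. -/
lemma taut_tr_case {A C D E : Formula Ag Xv Pr} (hA : Wf A) (hC : Wf C) (hD : Wf D)
    (hE : Wf E) (h1 : LEL (impl (.neg C) D)) (h2 : LEL (impl D (impl A E))) :
    LEL (impl A (fdisj E C)) := by
  have t : LEL (impl (impl (.neg C) D) (impl (impl D (impl A E)) (impl A (fdisj E C)))) := by
    apply LEL.taut
    · simp only [Formula.impl, Formula.fdisj, Formula.Wf]; tauto
    · intro v
      simp only [Formula.propEval, Formula.impl, Formula.fdisj]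
      cases propEval v A <;> cases propEval v C <;> cases propEval v D <;>
        cases propEval v E <;> simp
  exact (t.mp h1).mp h2

/-- From `A → B` and `B → (C → D)` derive `(A ∧ C) → D`. -/
lemma taut_curry {A B C D : Formula Ag Xv Pr} (hA : Wf A) (hB : Wf B) (hC : Wf C)
    (hD : Wf D) (h1 : LEL (impl A B)) (h2 : LEL (impl B (impl C D))) :
    LEL (impl (.and A C) D) := by
  have t : LEL (impl (impl A B) (impl (impl B (impl C D)) (impl (.and A C) D))) := by
    apply LEL.taut
    · simp only [Formula.impl, Formula.Wf]; tauto
    · intro v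
      simp only [Formula.propEval, Formula.impl]
      cases propEval v A <;> cases propEval v B <;> cases propEval v C <;>
        cases propEval v D <;> simp
  exact (t.mp h1).mp h2

/-- A simple tautology instance, used with `asgK`. -/
lemma lel_taut1 {A B : Formula Ag Xv Pr} (hA : Wf A) (hB : Wf B)
    (h : ∀ v, propEval v A = true → propEval v B = true) : LEL (impl A B) := by
  apply LEL.taut (wf_impl hA hB)
  intro v
  simp only [Formula.propEval, Formula.impl]
  cases hh : propEval v A
  · simp
  · simp [h v hh]

end Helpers

/-- the elimination schemas ELM-TR, ELM-¬, ELM-∧ and ELM-COM are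
theorems of LEL. -/
theorem lel_elimination_schemas
    {Ag Xv Pr : Type} [Fintype Ag] [Nonempty Ag] [DecidableEq Ag]
    [DecidableEq Xv] [Countable Xv] [Infinite Xv] [Countable Pr] :
    (∀ (x : Xv) (a : Ag) (χ : Formula Ag Xv Pr), Formula.Wf χ → x ∉ Formula.FV χ →
        LEL (Formula.fiff (.assign x a χ)
          (Formula.fdisj (.assign x a Formula.fbot) χ))) ∧
    (∀ (x : Xv) (a : Ag) (φ : Formula Ag Xv Pr), Formula.Wf φ →
        LEL (Formula.fiff (.assign x a (.neg φ))
          (Formula.fdisj (.assign x a Formula.fbot) (.neg (.assign x a φ))))) ∧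
    (∀ (x : Xv) (a : Ag) (φ ψ : Formula Ag Xv Pr), Formula.Wf φ → Formula.Wf ψ →
        LEL (Formula.fiff (.assign x a (.and φ ψ))
          (.and (.assign x a φ) (.assign x a ψ)))) ∧
    (∀ (x y : Xv) (a b : Ag) (φ : Formula Ag Xv Pr), Formula.Wf φ → y ≠ x →
        LEL (Formula.fiff (.assign x a (.assign y b φ))
          (.assign y b (.assign x a φ)))) := by
  have hbot : Formula.Wf (Formula.fbot : Formula Ag Xv Pr) := trivial
  refine ⟨?_, ?_, ?_, ?_⟩
  · -- ELM-TR
    intro x a χ hχ hx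
    -- backward direction
    have hbe : LEL (Formula.impl (.assign x a Formula.fbot) (.assign x a χ)) :=
      asgK hbot hχ (lel_taut1 hbot hχ (by
        intro v h; simp [Formula.propEval, Formula.fbot] at h))
    have htr : LEL (Formula.impl χ (.assign x a χ)) := LEL.tr hχ hx
    have back : LEL (Formula.impl (Formula.fdisj (.assign x a Formula.fbot) χ)
        (.assign x a χ)) := taut_disj_elim (A := .assign x a Formula.fbot) (B := χ) (C := .assign x a χ) hbot hχ hχ hbe htr
    -- forward direction
    have hnχ : Formula.Wf (Formula.neg χ) := hχ
    have h1 : LEL (Formula.impl (.neg χ) (.assign x a (.neg χ))) := LEL.tr hnχ hx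
    have h2 : LEL (Formula.impl (.assign x a (.neg χ))
        (.assign x a (Formula.impl χ Formula.fbot))) :=
      asgK hnχ (wf_impl hχ hbot) (lel_taut1 hnχ (wf_impl hχ hbot) (by
        intro v h
        simp [Formula.propEval, Formula.fbot, Formula.impl] at h ⊢
        simp [h]))
    have h3 : LEL (Formula.impl (.assign x a (Formula.impl χ Formula.fbot))
        (Formula.impl (.assign x a χ) (.assign x a Formula.fbot))) :=
      LEL.kasgn hχ hbot
    have h4 : LEL (Formula.impl (.assign x a (.neg χ))
        (Formula.impl (.assign x a χ) (.assign x a Formula.fbot))) :=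
      taut_trans (A := .assign x a (.neg χ)) (B := .assign x a (Formula.impl χ Formula.fbot)) (C := Formula.impl (.assign x a χ) (.assign x a Formula.fbot)) hnχ (wf_impl hχ hbot) ⟨hχ, hbot⟩ h2 h3
    have fwd : LEL (Formula.impl (.assign x a χ)
        (Formula.fdisj (.assign x a Formula.fbot) χ)) :=
      taut_tr_case (A := .assign x a χ) (C := χ) (D := .assign x a (.neg χ)) (E := .assign x a Formula.fbot) hχ hχ hnχ hbot h1 h4
    exact taut_iff_intro (A := .assign x a χ) (B := Formula.fdisj (.assign x a Formula.fbot) χ) hχ ⟨hbot, hχ⟩ fwd back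
  · -- ELM-¬
    intro x a φ hφ
    have hnφ : Formula.Wf (Formula.neg φ) := hφ
    -- forward
    have h2 : LEL (Formula.impl (.assign x a φ)
        (.assign x a (Formula.impl (.neg φ) Formula.fbot))) :=
      asgK hφ (wf_impl hnφ hbot) (lel_taut1 hφ (wf_impl hnφ hbot) (by
        intro v h
        simp [Formula.propEval, Formula.fbot, Formula.impl] at h ⊢
        simp [h]))
    have h3 : LEL (Formula.impl (.assign x a (Formula.impl (.neg φ) Formula.fbot))
        (Formula.impl (.assign x a (.neg φ)) (.assign x a Formula.fbot))) :=
      LEL.kasgn hnφ hbot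
    have h4 : LEL (Formula.impl (.assign x a φ)
        (Formula.impl (.assign x a (.neg φ)) (.assign x a Formula.fbot))) :=
      taut_trans (A := .assign x a φ) (B := .assign x a (Formula.impl (.neg φ) Formula.fbot)) (C := Formula.impl (.assign x a (.neg φ)) (.assign x a Formula.fbot)) hφ (wf_impl hnφ hbot) ⟨hnφ, hbot⟩ h2 h3
    have fwd : LEL (Formula.impl (.assign x a (.neg φ))
        (Formula.fdisj (.assign x a Formula.fbot) (.neg (.assign x a φ)))) :=
      taut_neg_case (A := .assign x a φ) (Q := .assign x a (.neg φ)) (E := .assign x a Formula.fbot) hφ hnφ hbot h4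
    -- backward
    have hbe : LEL (Formula.impl (.assign x a Formula.fbot) (.assign x a (.neg φ))) :=
      asgK hbot hnφ (lel_taut1 hbot hnφ (by
        intro v h; simp [Formula.propEval, Formula.fbot] at h))
    have hnnφ : Formula.Wf (Formula.neg (.neg φ)) := hφ
    have hdne : LEL (Formula.impl (.assign x a (.neg (.neg φ))) (.assign x a φ)) :=
      asgK hnnφ hφ (lel_taut1 hnnφ hφ (by
        intro v h
        simp [Formula.propEval] at h ⊢
        exact h))
    have hcon : LEL (Formula.impl (.neg (.assign x a φ))
        (.neg (.assign x a (.neg (.neg φ))))) := taut_contra (A := .assign x a (.neg (.neg φ))) (B := .assign x a φ) hnnφ hφ hdne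
    have hdet : LEL (Formula.impl (Formula.dia x a (.neg φ)) (.assign x a (.neg φ))) :=
      LEL.det hnφ
    have hndet : LEL (Formula.impl (.neg (.assign x a φ)) (.assign x a (.neg φ))) :=
      taut_trans (A := .neg (.assign x a φ)) (B := .neg (.assign x a (.neg (.neg φ)))) (C := .assign x a (.neg φ)) hφ hnnφ hnφ hcon hdet
    have back : LEL (Formula.impl
        (Formula.fdisj (.assign x a Formula.fbot) (.neg (.assign x a φ)))
        (.assign x a (.neg φ))) := taut_disj_elim (A := .assign x a Formula.fbot) (B := .neg (.assign x a φ)) (C := .assign x a (.neg φ)) hbot hφ hnφ hbe hndet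
    exact taut_iff_intro (A := .assign x a (.neg φ)) (B := Formula.fdisj (.assign x a Formula.fbot) (.neg (.assign x a φ))) hnφ ⟨hbot, hφ⟩ fwd back
  · -- ELM-∧
    intro x a φ ψ hφ hψ
    have hand : Formula.Wf (Formula.and φ ψ) := ⟨hφ, hψ⟩
    -- forward
    have e1 : LEL (Formula.impl (.assign x a (.and φ ψ)) (.assign x a φ)) :=
      asgK hand hφ (lel_taut1 hand hφ (by
        intro v h; simp [Formula.propEval] at h; exact h.1))
    have e2 : LEL (Formula.impl (.assign x a (.and φ ψ)) (.assign x a ψ)) :=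
      asgK hand hψ (lel_taut1 hand hψ (by
        intro v h; simp [Formula.propEval] at h; exact h.2))
    have fwd : LEL (Formula.impl (.assign x a (.and φ ψ))
        (.and (.assign x a φ) (.assign x a ψ))) := taut_and_intro (A := .assign x a (.and φ ψ)) (B := .assign x a φ) (C := .assign x a ψ) hand hφ hψ e1 e2
    -- backward
    have b1 : LEL (Formula.impl (.assign x a φ)
        (.assign x a (Formula.impl ψ (.and φ ψ)))) :=
      asgK hφ (wf_impl hψ hand) (lel_taut1 hφ (wf_impl hψ hand) (by
        intro v h
        simp [Formula.propEval, Formula.impl] at h ⊢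
        rcases Bool.eq_false_or_eq_true (Formula.propEval v ψ) with hv | hv <;> simp [h, hv]))
    have b2 : LEL (Formula.impl (.assign x a (Formula.impl ψ (.and φ ψ)))
        (Formula.impl (.assign x a ψ) (.assign x a (.and φ ψ)))) := LEL.kasgn hψ hand
    have back : LEL (Formula.impl (.and (.assign x a φ) (.assign x a ψ))
        (.assign x a (.and φ ψ))) :=
      taut_curry (A := .assign x a φ) (B := .assign x a (Formula.impl ψ (.and φ ψ))) (C := .assign x a ψ) (D := .assign x a (.and φ ψ)) hφ (wf_impl hψ hand) hψ hand b1 b2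
    exact taut_iff_intro (A := .assign x a (.and φ ψ)) (B := .and (.assign x a φ) (.assign x a ψ)) hand ⟨hφ, hψ⟩ fwd back
  · -- ELM-COM
    intro x y a b φ hφ hyx
    exact taut_iff_intro (A := .assign x a (.assign y b φ)) (B := .assign y b (.assign x a φ)) hφ hφ (LEL.com hφ (Ne.symm hyx)) (LEL.com hφ hyx)

end SimplicialEpistemic
end

section
/- Lindenbaum-type extension lemma: for any consistent set Γ of formulas of the extended language L_𝐀 such that no agent name occurs free in Γ (𝐀∩FV(Γ)=∅), there exist an FV-maximal consistent set Δ with Γ⊆Δ and an assignment σ:FV(Δ)→𝐀 such that the pair (Δ,σ) is coherent. -/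
namespace SimplicialEpistemic

/-- The set of variables occurring free in some formula of `Δ`. -/
def FVset {Ag Xv Pr : Type} [DecidableEq Xv] (Δ : Set (Formula Ag Xv Pr)) : Set Xv :=
  ⋃ φ ∈ Δ, (Formula.FV φ : Set Xv)

/-- `Δ` is an FV-maximal consistent set. -/
def FVMCS {Ag Xv Pr : Type} [DecidableEq Xv] (Δ : Set (Formula Ag Xv Pr)) : Prop :=
  (∀ φ ∈ Δ, Formula.Wf φ) ∧ Consistent Δ ∧
    ∀ φ : Formula Ag Xv Pr, Formula.Wf φ → (Formula.FV φ : Set Xv) ⊆ FVset Δ →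
      φ ∈ Δ ∨ (.neg φ) ∈ Δ

/-- Coherence of `(Δ, σ)` in the extended language `L_𝐀`, whose variables are
`Xv ⊕ Ag` (the agents serve as names of themselves). -/
def Coherent {Ag Xv Pr : Type} [DecidableEq Xv] [DecidableEq Ag]
    (Δ : Set (Formula Ag (Xv ⊕ Ag) Pr)) (σ : (Xv ⊕ Ag) → Ag) : Prop :=
  (∀ a : Ag, (Sum.inr a : Xv ⊕ Ag) ∈ FVset Δ → σ (Sum.inr a) = a) ∧
  (∀ z ∈ FVset Δ, ∀ l : List (Formula Ag (Xv ⊕ Ag) Pr), (∀ φ ∈ l, φ ∈ Δ) →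
      ¬ LEL (.neg (Formula.dia z (σ z) (Formula.bigAnd l)))) ∧
  (∀ (z : Xv ⊕ Ag) (a : Ag),
      Formula.dia z a .top ∈ Δ → (Sum.inr a : Xv ⊕ Ag) ∈ FVset Δ)

/-!
Apply Zorn's lemma to the pairs `(Δ, τ)` of an extension `Δ ⊇ Γ` and a partial assignment `τ`
such that `Δ` stays consistent behind every diamond prefix `⟨x₁:=τ x₁⟩ ⋯ ⟨xₙ:=τ xₙ⟩` on distinct
variables, and `τ` assigns each agent name free in `Δ` to itself. Refutations behind finitely many
such prefixes merge into one, since diamonds on distinct variables commute (COM) and distribute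
over disjunctions. So at a maximal pair one of `φ`, `¬φ` can always be added (FV-maximality);
every variable can be assigned some agent, for otherwise UI refutes `Δ`; and an agent `b` alive
in `Δ` (`⟨z:=b⟩⊤ ∈ Δ`) can be assigned to its own name, because by SUB and TR a dead agent is
dead under every name, which puts `b` into `FV(Δ)` through the theorem `K_b ⊤`. The assignment
`σ` is then read off `τ`.
-/

open Formula

section WellFormedness

variable {Ag Xv Pr : Type} [DecidableEq Xv]

theorem Formula.wf_subst {x y : Xv} {φ : Formula Ag Xv Pr} (h : Wf φ) : Wf (subst x y φ) := by
  induction φ with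
  | assign z a φ ih => unfold subst; split <;> [exact h; exact ih h]
  | and φ ψ ih₁ ih₂ => exact ⟨ih₁ h.1, ih₂ h.2⟩
  | neg φ ih => exact ih h
  | _ => exact h

theorem Formula.wf_bigAnd {l : List (Formula Ag Xv Pr)} (h : ∀ φ ∈ l, Wf φ) :
    Wf (bigAnd l) := by
  induction l with
  | nil => trivial
  | cons φ l ih => exact ⟨h φ (by simp), ih fun ψ hψ => h ψ (by simp [hψ])⟩

theorem Formula.mem_FV_bigAnd {l : List (Formula Ag Xv Pr)} {z : Xv} :
    z ∈ FV (bigAnd l) ↔ ∃ φ ∈ l, z ∈ FV φ := by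
  induction l with
  | nil => simp [bigAnd, FV]
  | cons φ l ih => simp [bigAnd, FV, ih]

theorem Formula.wf_assigns {xs : List Xv} {as : List Ag} {φ : Formula Ag Xv Pr} (h : Wf φ) :
    Wf (assigns xs as φ) := by
  induction xs generalizing as with
  | nil => exact h
  | cons x xs ih => cases as with
    | nil => exact h
    | cons a as => exact ih

theorem Formula.FV_assigns {xs : List Xv} {as : List Ag} {φ : Formula Ag Xv Pr}
    (hlen : xs.length = as.length) : FV (assigns xs as φ) = FV φ \ xs.toFinset := by
  induction xs generalizing as with
  | nil => cases as <;> simp_all [assigns]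
  | cons x xs ih => cases as with
    | nil => simp at hlen
    | cons a as =>
      simp only [assigns, FV, ih (by simpa using hlen)]
      ext z
      simp only [Finset.mem_sdiff, List.toFinset_cons, Finset.mem_insert, Finset.mem_singleton]
      tauto

theorem LEL.wf {φ : Formula Ag Xv Pr} (h : LEL φ) : Wf φ := by
  induction h with
  | mp _ _ ih => exact ih.2
  | kni hα _ hlen =>
    exact wf_assigns ⟨hα, wf_assigns hα, by simp [FV_assigns hlen, FV]⟩
  | @eni _ _ z l =>
    have hb : Wf (bigAnd (l.map fun b => assign z b (fbot : Formula Ag Xv Pr))) :=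
      wf_bigAnd (by simp [Wf, fbot])
    exact wf_assigns ⟨hb, hb, by ext; simp [mem_FV_bigAnd, FV, fbot]⟩
  | ui l hφ => exact ⟨wf_bigAnd (by simpa [Wf] using fun _ _ => hφ), hφ⟩
  | sub hφ => exact ⟨hφ, wf_subst hφ⟩
  | _ => simp_all [Wf, impl, dia, Sent, FV]

end WellFormedness

section PropEval

variable {Ag Xv Pr : Type} {A B : Formula Ag Xv Pr}

@[simp] theorem Formula.propEval_top (v : Formula Ag Xv Pr → Bool) : propEval v top = true := rfl

@[simp] theorem Formula.propEval_neg (v : Formula Ag Xv Pr → Bool) :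
    propEval v (neg A) = true ↔ ¬ propEval v A = true := by
  simp [propEval]

@[simp] theorem Formula.propEval_and (v : Formula Ag Xv Pr → Bool) :
    propEval v (.and A B) = true ↔ propEval v A = true ∧ propEval v B = true := by
  simp [propEval]

@[simp] theorem Formula.propEval_impl (v : Formula Ag Xv Pr → Bool) :
    propEval v (impl A B) = true ↔ (propEval v A = true → propEval v B = true) := by
  simp [impl]

@[simp] theorem Formula.propEval_fdisj (v : Formula Ag Xv Pr → Bool) :
    propEval v (fdisj A B) = true ↔ propEval v A = true ∨ propEval v B = true := by
  simp [fdisj, -Bool.not_eq_true]; tauto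

@[simp] theorem Formula.propEval_bigAnd (v : Formula Ag Xv Pr → Bool)
    (l : List (Formula Ag Xv Pr)) :
    propEval v (bigAnd l) = true ↔ ∀ φ ∈ l, propEval v φ = true := by
  induction l with
  | nil => simp [bigAnd]
  | cons φ l ih => simp [bigAnd, ih]

end PropEval

section Propositional

variable {Ag Xv Pr : Type} [DecidableEq Xv] {A B C : Formula Ag Xv Pr}

theorem LEL.of_tautology {l : List (Formula Ag Xv Pr)} {ψ : Formula Ag Xv Pr}
    (hl : ∀ φ ∈ l, LEL φ) (hψ : Wf ψ)
    (h : ∀ v, (∀ φ ∈ l, propEval v φ = true) → propEval v ψ = true) : LEL ψ := by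
  induction l generalizing ψ with
  | nil => exact LEL.taut hψ fun v => h v (by simp)
  | cons φ l ih =>
    have hφ := hl φ (by simp)
    refine LEL.mp (ih (fun χ hχ => hl χ (by simp [hχ])) ⟨hφ.wf, hψ⟩ fun v hv => ?_) hφ
    simpa using fun hφv => h v (by simpa [hφv] using hv)

theorem LEL.taut_top : LEL (top : Formula Ag Xv Pr) :=
  LEL.taut trivial fun _ => rfl

theorem LEL.imp_trans (h₁ : LEL (impl A B)) (h₂ : LEL (impl B C)) : LEL (impl A C) :=
  LEL.of_tautology (l := [impl A B, impl B C]) (by simp [h₁, h₂]) ⟨h₁.wf.1, h₂.wf.2⟩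
    fun v => by simp [-Bool.not_eq_true]; tauto

theorem LEL.contrapose (h : LEL (impl A B)) : LEL (impl (neg B) (neg A)) :=
  LEL.of_tautology (l := [impl A B]) (by simp [h]) ⟨h.wf.2, h.wf.1⟩
    fun v => by simp [-Bool.not_eq_true]; tauto

theorem LEL.neg_of_imp (h₁ : LEL (impl A B)) (h₂ : LEL (neg B)) : LEL (neg A) :=
  LEL.mp h₁.contrapose h₂

theorem LEL.neg_neg (h : LEL A) : LEL (neg (neg A)) :=
  LEL.of_tautology (l := [A]) (by simp [h]) h.wf fun v => by simp

theorem LEL.imp_neg_neg (hA : Wf A) : LEL (impl A (neg (neg A))) :=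
  LEL.taut ⟨hA, hA⟩ fun v => by simp

theorem LEL.neg_neg_imp (hA : Wf A) : LEL (impl (neg (neg A)) A) :=
  LEL.taut ⟨hA, hA⟩ fun v => by simp

theorem LEL.bigAnd_imp_bigAnd {l m : List (Formula Ag Xv Pr)} (hl : ∀ φ ∈ l, Wf φ)
    (hml : m ⊆ l) : LEL (impl (bigAnd l) (bigAnd m)) :=
  LEL.taut ⟨wf_bigAnd hl, wf_bigAnd fun φ hφ => hl φ (hml hφ)⟩ fun v => by
    simpa using fun h φ hφ => h φ (hml hφ)

end Propositional

section Modal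

variable {Ag Xv Pr : Type} [DecidableEq Xv] {A B C : Formula Ag Xv Pr} {x y : Xv} {a b : Ag}

theorem LEL.assign_mono (h : LEL (impl A B)) : LEL (impl (assign x a A) (assign x a B)) :=
  LEL.mp (LEL.kasgn h.wf.1 h.wf.2) (LEL.necA h)

theorem LEL.assign_imp_imp (h : LEL (impl A (impl B C))) :
    LEL (impl (assign x a A) (impl (assign x a B) (assign x a C))) :=
  (LEL.assign_mono h).imp_trans (LEL.kasgn h.wf.2.1 h.wf.2.2)

theorem LEL.dia_mono (h : LEL (impl A B)) : LEL (impl (dia x a A) (dia x a B)) :=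
  (LEL.assign_mono h.contrapose).contrapose

theorem LEL.neg_dia (h : LEL (neg A)) : LEL (neg (dia x a A)) :=
  (LEL.necA h).neg_neg

theorem LEL.dia_fdisj (hA : Wf A) (hB : Wf B) :
    LEL (impl (dia x a (fdisj A B)) (fdisj (dia x a A) (dia x a B))) := by
  have hK := LEL.assign_imp_imp (x := x) (a := a)
    (LEL.taut (φ := impl (neg A) (impl (neg B) (neg (fdisj A B))))
      ⟨hA, hB, hA, hB⟩ fun v => by simp [-Bool.not_eq_true]; tauto)
  exact LEL.of_tautology (l := [_]) (by simpa using hK) ⟨⟨hA, hB⟩, hA, hB⟩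
    fun v => by simp [dia, -Bool.not_eq_true]; tauto

theorem LEL.dia_comm (hxy : x ≠ y) (hC : Wf C) :
    LEL (impl (dia x a (dia y b C)) (dia y b (dia x a C))) :=
  LEL.contrapose <|
    (LEL.assign_mono (LEL.neg_neg_imp (A := assign x a (neg C)) hC)).imp_trans <|
    (LEL.com (φ := neg C) hC hxy.symm).imp_trans <|
    LEL.assign_mono (LEL.imp_neg_neg (A := assign y b (neg C)) hC)

theorem LEL.know_top (X : Finset Xv) : LEL (know X (top : Formula Ag Xv Pr)) :=
  LEL.mp (LEL.mono (Finset.empty_subset X) ⟨trivial, rfl⟩)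
    (LEL.necK ⟨trivial, rfl⟩ LEL.taut_top)

theorem LEL.assign_fbot_imp (x y : Xv) (a : Ag) :
    LEL (impl (assign x a (fbot : Formula Ag Xv Pr)) (assign y a fbot)) := by
  have hsub : LEL (assign y a (impl (assign x a (fbot : Formula Ag Xv Pr)) fbot)) := by
    simpa [subst, fbot] using LEL.sub (x := x) (y := y) (a := a) (φ := fbot) trivial trivial
  exact (LEL.tr (φ := assign x a fbot) (x := y) (a := a) trivial (by simp [FV, fbot])).imp_trans
    (LEL.mp (LEL.kasgn trivial trivial) hsub)

/-- An agent alive under some name `y` can be given a fresh name `x`. -/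
theorem LEL.dia_of_dia_top (hA : Wf A) (hx : x ∉ FV A) :
    LEL (impl (.and (dia y a top) A) (dia x a A)) := by
  have hK := LEL.assign_imp_imp (x := x) (a := a)
    (LEL.taut (φ := impl A (impl (neg A) fbot)) ⟨hA, hA, trivial⟩ fun v => by simp [fbot])
  refine LEL.of_tautology
    (l := [impl (assign x a fbot) (assign y a fbot), impl A (assign x a A),
      impl (assign x a A) (impl (assign x a (neg A)) (assign x a fbot))])
    (by simp [LEL.assign_fbot_imp x y a, LEL.tr hA hx, hK])
    ⟨⟨trivial, hA⟩, hA⟩ fun v => by simp [dia, fbot, -Bool.not_eq_true]; tauto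

end Modal

section Prefix

variable {Ag Xv Pr : Type} {A B χ : Formula Ag Xv Pr} {P Q : List (Xv × Ag)}

def Formula.dias : List (Xv × Ag) → Formula Ag Xv Pr → Formula Ag Xv Pr
  | [], φ => φ
  | p :: P, φ => dia p.1 p.2 (dias P φ)

@[simp] theorem Formula.dias_nil (φ : Formula Ag Xv Pr) : dias [] φ = φ := rfl

theorem Formula.dias_append (P Q : List (Xv × Ag)) (φ : Formula Ag Xv Pr) :
    dias (P ++ Q) φ = dias P (dias Q φ) := by
  induction P with
  | nil => rfl
  | cons p P ih => simp [dias, ih]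

variable [DecidableEq Xv]

@[simp] theorem Formula.wf_dias_iff : Wf (dias P A) ↔ Wf A := by
  induction P with
  | nil => rfl
  | cons p P ih => exact ih

theorem LEL.dias_mono (h : LEL (impl A B)) : LEL (impl (dias P A) (dias P B)) := by
  induction P with
  | nil => exact h
  | cons p P ih => exact ih.dia_mono

theorem LEL.neg_dias_of_imp (h : LEL (impl A B)) (hB : LEL (neg (dias P B))) :
    LEL (neg (dias P A)) :=
  (LEL.dias_mono h).neg_of_imp hB

theorem LEL.neg_dias (h : LEL (neg A)) : LEL (neg (dias P A)) := by
  induction P with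
  | nil => exact h
  | cons p P ih => exact ih.neg_dia

theorem LEL.dias_fdisj (hA : Wf A) (hB : Wf B) :
    LEL (impl (dias P (fdisj A B)) (fdisj (dias P A) (dias P B))) := by
  induction P with
  | nil => exact LEL.taut ⟨⟨hA, hB⟩, hA, hB⟩ fun v => by simp
  | cons p P ih =>
    exact ih.dia_mono.imp_trans (LEL.dia_fdisj (wf_dias_iff.2 hA) (wf_dias_iff.2 hB))

theorem LEL.dias_perm (hPQ : P.Perm Q) (hP : (P.map Prod.fst).Nodup) (hA : Wf A) :
    LEL (impl (dias P A) (dias Q A)) := by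
  induction hPQ with
  | nil => exact LEL.taut ⟨hA, hA⟩ fun v => by simp
  | cons p _ ih => exact (ih (List.nodup_cons.mp hP).2).dia_mono
  | swap p q P =>
    simp only [List.map_cons, List.nodup_cons, List.mem_cons, not_or] at hP
    exact LEL.dia_comm hP.1.1 (wf_dias_iff.2 hA)
  | trans h₁ _ ih₁ ih₂ => exact (ih₁ hP).imp_trans (ih₂ ((h₁.map Prod.fst).nodup_iff.mp hP))

/-- `Q` is a permutation of some `E ++ P`: diamonds on distinct variables commute by COM, and
the outer diamonds `⟨E⟩` keep the refutation by necessitation. -/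
theorem LEL.neg_dias_of_subset (hPQ : P ⊆ Q) (hP : P.Nodup) (hQ : (Q.map Prod.fst).Nodup)
    (h : LEL (neg (dias P χ))) : LEL (neg (dias Q χ)) := by
  obtain ⟨P', hP', hP'Q⟩ := List.subperm_of_subset hP hPQ
  obtain ⟨E, hE⟩ := hP'Q.exists_perm_append
  have hQEP : Q.Perm (E ++ P) := hE.trans ((hP'.append_right E).trans List.perm_append_comm)
  have hEP : LEL (neg (dias (E ++ P) χ)) := by
    rw [dias_append]
    exact h.neg_dias
  exact (LEL.dias_perm hQEP hQ (wf_dias_iff.1 h.wf)).neg_of_imp hEP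

theorem LEL.neg_dias_fdisj (hA : LEL (neg (dias P A))) (hB : LEL (neg (dias P B))) :
    LEL (neg (dias P (fdisj A B))) :=
  (LEL.dias_fdisj (wf_dias_iff.1 hA.wf) (wf_dias_iff.1 hB.wf)).neg_of_imp <|
    LEL.of_tautology (l := [neg (dias P A), neg (dias P B)]) (by simp [hA, hB]) ⟨hA.wf, hB.wf⟩
      fun v => by simp [-Bool.not_eq_true]

theorem LEL.neg_dias_neg_bigAnd {ms : List (Formula Ag Xv Pr)}
    (h : ∀ ψ ∈ ms, LEL (neg (dias P (neg ψ)))) : LEL (neg (dias P (neg (bigAnd ms)))) := by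
  induction ms with
  | nil => exact LEL.neg_dias LEL.taut_top.neg_neg
  | cons ψ ms ih =>
    have hψ : Wf ψ := (wf_dias_iff (A := neg ψ)).1 (h ψ (by simp)).wf
    have hms : Wf (bigAnd ms) :=
      wf_bigAnd fun φ hφ => (wf_dias_iff (A := neg φ)).1 (h φ (by simp [hφ])).wf
    have hsplit : LEL (impl (neg (bigAnd (ψ :: ms))) (fdisj (neg ψ) (neg (bigAnd ms)))) :=
      LEL.taut ⟨⟨hψ, hms⟩, hψ, hms⟩ fun v => by simp [bigAnd, -Bool.not_eq_true]; tauto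
    exact LEL.neg_dias_of_imp hsplit
      (LEL.neg_dias_fdisj (h ψ (by simp)) (ih fun φ hφ => h φ (by simp [hφ])))

end Prefix

section PrefixConsistent

variable {Ag Xv Pr : Type} [DecidableEq Xv] {Δ : Set (Formula Ag Xv Pr)} {τ : Set (Xv × Ag)}
  {φ : Formula Ag Xv Pr} {z : Xv}

/-- `τ` is a partial assignment given by its graph. On one-element prefixes this is coherence
condition (ii); quantifying over all finite prefixes is what lets refutations be merged. -/
def PrefixConsistent (Δ : Set (Formula Ag Xv Pr)) (τ : Set (Xv × Ag)) : Prop :=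
  ∀ l : List (Formula Ag Xv Pr), (∀ ψ ∈ l, ψ ∈ Δ) → ∀ P : List (Xv × Ag), (∀ p ∈ P, p ∈ τ) →
    (P.map Prod.fst).Nodup → ¬ LEL (neg (dias P (bigAnd l)))

theorem PrefixConsistent.consistent (h : PrefixConsistent Δ τ) : Consistent Δ :=
  fun ⟨l, hl, hr⟩ => h l hl [] (by simp) (by simp) hr

theorem Consistent.prefixConsistent_empty (h : Consistent Δ) : PrefixConsistent Δ ∅ := by
  rintro l hl (_ | ⟨p, P⟩) hP - hr
  · exact h ⟨l, hl, hr⟩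
  · exact hP p (by simp)

theorem exists_common_refuting_prefix {ι : Type*} [Fintype ι] (hτ : Set.InjOn Prod.fst τ)
    {P : ι → List (Xv × Ag)} {χ : ι → Formula Ag Xv Pr} (hP : ∀ i, ∀ p ∈ P i, p ∈ τ)
    (hnd : ∀ i, ((P i).map Prod.fst).Nodup) (hr : ∀ i, LEL (neg (dias (P i) (χ i)))) :
    ∃ Q : List (Xv × Ag), (∀ p ∈ Q, p ∈ τ) ∧ (Q.map Prod.fst).Nodup ∧
      ∀ i, LEL (neg (dias Q (χ i))) := by
  classical
  set Q := ((Finset.univ : Finset ι).toList.flatMap P).dedup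
  have hPQ (i : ι) : P i ⊆ Q := fun p hp =>
    List.mem_dedup.2 (List.mem_flatMap.2 ⟨i, Finset.mem_toList.2 (Finset.mem_univ i), hp⟩)
  have hQ : ∀ p ∈ Q, p ∈ τ := by
    simp only [Q, List.mem_dedup, List.mem_flatMap]
    rintro p ⟨i, -, hp⟩
    exact hP i p hp
  have hQnd : (Q.map Prod.fst).Nodup :=
    (List.nodup_dedup _).map_on fun p hp q hq => hτ (hQ p hp) (hQ q hq)
  exact ⟨Q, hQ, hQnd, fun i => (hr i).neg_dias_of_subset (hPQ i) (hnd i).of_map hQnd⟩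

theorem exists_refutation_of_not_prefixConsistent_insert (hΔ : ∀ ψ ∈ Δ, Wf ψ) (hφ : Wf φ)
    (h : ¬ PrefixConsistent (insert φ Δ) τ) :
    ∃ l : List (Formula Ag Xv Pr), (∀ ψ ∈ l, ψ ∈ Δ) ∧ ∃ P : List (Xv × Ag), (∀ p ∈ P, p ∈ τ) ∧
      (P.map Prod.fst).Nodup ∧ LEL (neg (dias P (bigAnd (φ :: l)))) := by
  classical
  simp only [PrefixConsistent, not_forall, not_not] at h
  obtain ⟨l, hl, P, hP, hnd, hr⟩ := h
  refine ⟨l.filter (· ∈ Δ), fun ψ hψ => by simpa using (List.mem_filter.1 hψ).2, P, hP, hnd,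
    LEL.neg_dias_of_imp (LEL.bigAnd_imp_bigAnd ?_ fun {ψ} hψ => ?_) hr⟩
  · simp only [List.mem_cons, List.mem_filter, decide_eq_true_eq]
    rintro ψ (rfl | ⟨-, hψ⟩)
    exacts [hφ, hΔ ψ hψ]
  · rcases hl ψ hψ with rfl | hψΔ
    · exact List.mem_cons_self
    · exact List.mem_cons_of_mem _ (List.mem_filter.2 ⟨hψ, by simpa using hψΔ⟩)

theorem PrefixConsistent.insert_of_LEL (h : PrefixConsistent Δ τ) (hΔ : ∀ ψ ∈ Δ, Wf ψ)
    (hφ : LEL φ) : PrefixConsistent (insert φ Δ) τ := by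
  by_contra hn
  obtain ⟨l, hl, P, hP, hnd, hr⟩ := exists_refutation_of_not_prefixConsistent_insert hΔ hφ.wf hn
  have himp : LEL (impl (bigAnd l) (bigAnd (φ :: l))) := LEL.of_tautology (l := [φ])
    (by simp [hφ]) ⟨wf_bigAnd fun ψ hψ => hΔ ψ (hl ψ hψ), (wf_dias_iff (A := bigAnd _)).1 hr.wf⟩
    fun v => by simp [bigAnd]; tauto
  exact h l hl P hP hnd (LEL.neg_dias_of_imp himp hr)

theorem PrefixConsistent.insert_or_insert_neg (h : PrefixConsistent Δ τ)
    (hΔ : ∀ ψ ∈ Δ, Wf ψ) (hτ : Set.InjOn Prod.fst τ) (hφ : Wf φ) :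
    PrefixConsistent (insert φ Δ) τ ∨ PrefixConsistent (insert (neg φ) Δ) τ := by
  by_contra! hn
  obtain ⟨l₁, hl₁, P₁, hP₁, hnd₁, hr₁⟩ :=
    exists_refutation_of_not_prefixConsistent_insert hΔ hφ hn.1
  obtain ⟨l₂, hl₂, P₂, hP₂, hnd₂, hr₂⟩ :=
    exists_refutation_of_not_prefixConsistent_insert (φ := neg φ) hΔ hφ hn.2
  obtain ⟨Q, hQ, hQnd, hQr⟩ := exists_common_refuting_prefix hτ (P := ![P₁, P₂])
    (χ := ![bigAnd (φ :: l₁), bigAnd (neg φ :: l₂)]) (Fin.forall_fin_two.2 ⟨hP₁, hP₂⟩)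
    (Fin.forall_fin_two.2 ⟨hnd₁, hnd₂⟩) (Fin.forall_fin_two.2 ⟨hr₁, hr₂⟩)
  set L := l₁ ++ l₂
  have hL : ∀ ψ ∈ L, ψ ∈ Δ := fun ψ hψ => (List.mem_append.1 hψ).elim (hl₁ ψ) (hl₂ ψ)
  have hwf {θ : Formula Ag Xv Pr} (hθ : Wf θ) : ∀ ψ ∈ θ :: L, Wf ψ :=
    List.forall_mem_cons.2 ⟨hθ, fun ψ hψ => hΔ ψ (hL ψ hψ)⟩
  have hcases : LEL (impl (bigAnd L) (fdisj (bigAnd (φ :: L)) (bigAnd (neg φ :: L)))) :=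
    LEL.taut ⟨(wf_bigAnd (hwf hφ)).2, wf_bigAnd (hwf hφ), wf_bigAnd (hwf (θ := neg φ) hφ)⟩
      fun v => by simp [bigAnd, -Bool.not_eq_true]; tauto
  refine h L hL Q hQ hQnd (LEL.neg_dias_of_imp hcases (LEL.neg_dias_fdisj ?_ ?_))
  · exact LEL.neg_dias_of_imp (LEL.bigAnd_imp_bigAnd (hwf hφ)
      (List.cons_subset_cons _ (List.subset_append_left _ _))) (hQr 0)
  · exact LEL.neg_dias_of_imp (LEL.bigAnd_imp_bigAnd (hwf (θ := neg φ) hφ)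
      (List.cons_subset_cons _ (List.subset_append_right _ _))) (hQr 1)

theorem exists_refutation_of_not_prefixConsistent_insert_pair {a : Ag}
    (h : PrefixConsistent Δ τ) (hn : ¬ PrefixConsistent Δ (insert (z, a) τ)) :
    ∃ l : List (Formula Ag Xv Pr), (∀ ψ ∈ l, ψ ∈ Δ) ∧ ∃ P : List (Xv × Ag), (∀ p ∈ P, p ∈ τ) ∧
      (P.map Prod.fst).Nodup ∧ LEL (neg (dias P (dia z a (bigAnd l)))) := by
  classical
  simp only [PrefixConsistent, not_forall, not_not] at hn
  obtain ⟨l, hl, P, hP, hnd, hr⟩ := hn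
  by_cases hza : (z, a) ∈ P
  swap
  · refine absurd hr (h l hl P (fun p hp => (hP p hp).resolve_left ?_) hnd)
    rintro rfl
    exact hza hp
  have hperm : P.Perm (P.erase (z, a) ++ [(z, a)]) :=
    (List.perm_cons_erase hza).trans (List.perm_append_singleton _ _).symm
  refine ⟨l, hl, P.erase (z, a), fun p hp => ?_, hnd.sublist (List.erase_sublist.map _), ?_⟩
  · obtain ⟨hpza, hpP⟩ := hnd.of_map.mem_erase_iff.1 hp
    exact (hP p hpP).resolve_left hpza
  · have := (LEL.dias_perm hperm.symm ((hperm.map Prod.fst).nodup_iff.1 hnd)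
      ((wf_dias_iff (A := bigAnd l)).1 hr.wf)).neg_of_imp hr
    rwa [dias_append] at this

theorem PrefixConsistent.exists_insert_pair [Fintype Ag] (h : PrefixConsistent Δ τ)
    (hΔ : ∀ ψ ∈ Δ, Wf ψ) (hτ : Set.InjOn Prod.fst τ) (z : Xv) :
    ∃ a, PrefixConsistent Δ (insert (z, a) τ) := by
  by_contra! hn
  choose l hl P hP hnd hr using
    fun a => exists_refutation_of_not_prefixConsistent_insert_pair h (hn a)
  set ags := (Finset.univ : Finset Ag).toList
  have hags (a : Ag) : a ∈ ags := by simp [ags]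
  set L := ags.flatMap l
  have hL : ∀ ψ ∈ L, ψ ∈ Δ := by
    simp only [L, List.mem_flatMap]
    rintro ψ ⟨a, -, hψ⟩
    exact hl a ψ hψ
  have hwf : ∀ ψ ∈ L, Wf ψ := fun ψ hψ => hΔ ψ (hL ψ hψ)
  obtain ⟨Q, hQ, hQnd, hQr⟩ := exists_common_refuting_prefix hτ hP hnd hr
  have hui := LEL.ui (x := z) (φ := neg (bigAnd L)) ags (wf_bigAnd hwf) (Finset.nodup_toList _) hags
  have hL_imp :
      LEL (impl (bigAnd L) (neg (bigAnd (ags.map fun a => assign z a (neg (bigAnd L)))))) :=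
    LEL.of_tautology (l := [_]) (by simpa using hui) ⟨wf_bigAnd hwf, hui.wf.1⟩
      fun v => by simp only [List.mem_singleton, forall_eq, propEval_impl, propEval_neg]; tauto
  refine h L hL Q hQ hQnd (LEL.neg_dias_of_imp hL_imp (LEL.neg_dias_neg_bigAnd fun ψ hψ => ?_))
  obtain ⟨a, -, rfl⟩ := List.mem_map.1 hψ
  exact LEL.neg_dias_of_imp (LEL.dia_mono (LEL.bigAnd_imp_bigAnd hwf
    fun ψ hψ => List.mem_flatMap.2 ⟨a, hags a, hψ⟩)) (hQr a)

theorem PrefixConsistent.insert_pair_of_dia_top_mem {y : Xv} {a : Ag} (h : PrefixConsistent Δ τ)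
    (hΔ : ∀ ψ ∈ Δ, Wf ψ) (hdia : dia y a top ∈ Δ) (hz : ∀ ψ ∈ Δ, z ∉ FV ψ) :
    PrefixConsistent Δ (insert (z, a) τ) := by
  by_contra hn
  obtain ⟨l, hl, P, hP, hnd, hr⟩ := exists_refutation_of_not_prefixConsistent_insert_pair h hn
  have hzl : z ∉ FV (bigAnd l) := fun hzl =>
    let ⟨ψ, hψ, hzψ⟩ := mem_FV_bigAnd.1 hzl
    hz ψ (hl ψ hψ) hzψ
  refine h (dia y a top :: l) (List.forall_mem_cons.2 ⟨hdia, hl⟩) P hP hnd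
    (LEL.neg_dias_of_imp (LEL.dia_of_dia_top (wf_bigAnd fun ψ hψ => hΔ ψ (hl ψ hψ)) hzl) hr)

end PrefixConsistent

theorem _root_.IsChain.exists_mem_forall_mem_fst_snd {α β : Type*} {c : Set (Set α × Set β)}
    (hc : IsChain (· ≤ ·) c) (hne : c.Nonempty) {l : List α} {P : List β}
    (hl : ∀ x ∈ l, x ∈ ⋃ s ∈ c, s.1) (hP : ∀ y ∈ P, y ∈ ⋃ s ∈ c, s.2) :
    ∃ s ∈ c, (∀ x ∈ l, x ∈ s.1) ∧ ∀ y ∈ P, y ∈ s.2 := by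
  classical
  obtain ⟨s, hs, hls⟩ := DirectedOn.exists_mem_subset_of_finset_subset_biUnion (f := Prod.fst)
    (s := l.toFinset) hne (hc.directedOn.mono fun _ _ h => h.1)
    fun x hx => hl x (by simpa using hx)
  obtain ⟨t, ht, hPt⟩ := DirectedOn.exists_mem_subset_of_finset_subset_biUnion (f := Prod.snd)
    (s := P.toFinset) hne (hc.directedOn.mono fun _ _ h => h.2)
    fun y hy => hP y (by simpa using hy)
  simp only [List.coe_toFinset] at hls hPt
  rcases hc.total hs ht with hst | hts
  · exact ⟨t, ht, fun x hx => hst.1 (hls hx), fun y hy => hPt hy⟩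
  · exact ⟨s, hs, fun x hx => hls hx, fun y hy => hts.2 (hPt hy)⟩

section Lindenbaum

variable {Ag Xv Pr : Type} [DecidableEq Xv]

theorem mem_FVset {Δ : Set (Formula Ag Xv Pr)} {z : Xv} :
    z ∈ FVset Δ ↔ ∃ φ ∈ Δ, z ∈ FV φ := by
  simp [FVset]

theorem FVset_insert (φ : Formula Ag Xv Pr) (Δ : Set (Formula Ag Xv Pr)) :
    FVset (insert φ Δ) = ↑(FV φ) ∪ FVset Δ := by
  simp [FVset]

theorem FVset_mono {Δ Δ' : Set (Formula Ag Xv Pr)} (h : Δ ⊆ Δ') : FVset Δ ⊆ FVset Δ' :=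
  Set.biUnion_subset_biUnion_left h

variable [DecidableEq Ag]

structure IsLindenbaumStage (Γ Δ : Set (Formula Ag (Xv ⊕ Ag) Pr)) (τ : Set ((Xv ⊕ Ag) × Ag)) :
    Prop where
  subset : Γ ⊆ Δ
  wf : ∀ φ ∈ Δ, Wf φ
  injOn : Set.InjOn Prod.fst τ
  name_mem_iff : ∀ a b : Ag, (Sum.inr a, b) ∈ τ ↔ b = a ∧ Sum.inr a ∈ FVset Δ
  prefixConsistent : PrefixConsistent Δ τ

variable {Γ Δ : Set (Formula Ag (Xv ⊕ Ag) Pr)} {τ : Set ((Xv ⊕ Ag) × Ag)}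

theorem isLindenbaumStage_self (hwf : ∀ φ ∈ Γ, Wf φ) (hcon : Consistent Γ)
    (hfree : ∀ φ ∈ Γ, ∀ a : Ag, (Sum.inr a : Xv ⊕ Ag) ∉ FV φ) : IsLindenbaumStage Γ Γ ∅ where
  subset := subset_rfl
  wf := hwf
  injOn := Set.injOn_empty _
  name_mem_iff a b := by simpa [mem_FVset] using fun _ φ hφ => hfree φ hφ a
  prefixConsistent := hcon.prefixConsistent_empty

theorem IsLindenbaumStage.iUnion
    {c : Set (Set (Formula Ag (Xv ⊕ Ag) Pr) × Set ((Xv ⊕ Ag) × Ag))} (hc : IsChain (· ≤ ·) c)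
    (hne : c.Nonempty) (h : ∀ s ∈ c, IsLindenbaumStage Γ s.1 s.2) :
    IsLindenbaumStage Γ (⋃ s ∈ c, s.1) (⋃ s ∈ c, s.2) := by
  obtain ⟨s₀, hs₀⟩ := hne
  have hFV : ∀ s ∈ c, FVset s.1 ⊆ FVset (⋃ s ∈ c, s.1) := fun s hs =>
    FVset_mono (Set.subset_biUnion_of_mem (u := Prod.fst) hs)
  refine ⟨(h s₀ hs₀).subset.trans (Set.subset_biUnion_of_mem (u := Prod.fst) hs₀), ?_, ?_, ?_, ?_⟩
  · simp only [Set.mem_iUnion]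
    rintro φ ⟨s, hs, hφ⟩
    exact (h s hs).wf φ hφ
  · simp only [Set.InjOn, Set.mem_iUnion]
    rintro p ⟨s, hs, hp⟩ q ⟨t, ht, hq⟩
    rcases hc.total hs ht with hst | hts
    · exact (h t ht).injOn (hst.2 hp) hq
    · exact (h s hs).injOn hp (hts.2 hq)
  · intro a b
    simp only [Set.mem_iUnion]
    constructor
    · rintro ⟨s, hs, hab⟩
      obtain ⟨rfl, ha⟩ := ((h s hs).name_mem_iff a b).1 hab
      exact ⟨rfl, hFV s hs ha⟩
    · rintro ⟨rfl, ha⟩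
      obtain ⟨φ, hφ, haφ⟩ := mem_FVset.1 ha
      simp only [Set.mem_iUnion] at hφ
      obtain ⟨s, hs, hφ⟩ := hφ
      exact ⟨s, hs, ((h s hs).name_mem_iff b b).2 ⟨rfl, mem_FVset.2 ⟨φ, hφ, haφ⟩⟩⟩
  · intro l hl P hP hnd
    obtain ⟨s, hs, hls, hPs⟩ := hc.exists_mem_forall_mem_fst_snd ⟨s₀, hs₀⟩ hl hP
    exact (h s hs).prefixConsistent l hls P hPs hnd

theorem IsLindenbaumStage.insert_formula (h : IsLindenbaumStage Γ Δ τ)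
    {φ : Formula Ag (Xv ⊕ Ag) Pr} (hφ : Wf φ) (hFV : ↑(FV φ) ⊆ FVset Δ)
    (hc : PrefixConsistent (insert φ Δ) τ) : IsLindenbaumStage Γ (insert φ Δ) τ where
  subset := h.subset.trans (Set.subset_insert _ _)
  wf := Set.forall_mem_insert.2 ⟨hφ, h.wf⟩
  injOn := h.injOn
  name_mem_iff a b := by rw [FVset_insert, Set.union_eq_right.2 hFV]; exact h.name_mem_iff a b
  prefixConsistent := hc

theorem IsLindenbaumStage.insert_var (h : IsLindenbaumStage Γ Δ τ) {x : Xv} {a : Ag}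
    (hx : ∀ c, (Sum.inl x, c) ∉ τ) (hc : PrefixConsistent Δ (insert (Sum.inl x, a) τ)) :
    IsLindenbaumStage Γ Δ (insert (Sum.inl x, a) τ) where
  subset := h.subset
  wf := h.wf
  injOn := (Set.injOn_insert (hx a)).2 ⟨h.injOn, fun ⟨⟨_, c⟩, hc, hcx⟩ => hx c (by simp_all)⟩
  name_mem_iff a b := by simpa using h.name_mem_iff a b
  prefixConsistent := hc

theorem IsLindenbaumStage.insert_name (h : IsLindenbaumStage Γ Δ τ) {b : Ag}
    (hb : Sum.inr b ∉ FVset Δ)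
    (hc : PrefixConsistent (insert (know {Sum.inr b} top) Δ) (insert (Sum.inr b, b) τ)) :
    IsLindenbaumStage Γ (insert (know {Sum.inr b} top) Δ) (insert (Sum.inr b, b) τ) where
  subset := h.subset.trans (Set.subset_insert _ _)
  wf := Set.forall_mem_insert.2 ⟨⟨trivial, rfl⟩, h.wf⟩
  injOn := by
    have hbτ (c : Ag) : (Sum.inr b, c) ∉ τ := fun hbc => hb ((h.name_mem_iff b c).1 hbc).2
    exact (Set.injOn_insert (hbτ b)).2 ⟨h.injOn, fun ⟨⟨_, c⟩, hc, hcb⟩ => hbτ c (by simp_all)⟩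
  name_mem_iff a c := by
    simp only [Set.mem_insert_iff, Prod.mk.injEq, Sum.inr.injEq, FVset_insert, FV,
      Finset.coe_singleton, Set.mem_union, Set.mem_singleton_iff, h.name_mem_iff]
    grind
  prefixConsistent := hc

variable (Γ Δ τ) in
structure IsMaximalLindenbaumStage : Prop where
  isLindenbaumStage : IsLindenbaumStage Γ Δ τ
  maximal : ∀ Δ' τ', IsLindenbaumStage Γ Δ' τ' → Δ ⊆ Δ' → τ ⊆ τ' → Δ' ⊆ Δ ∧ τ' ⊆ τ

theorem exists_isMaximalLindenbaumStage (h : IsLindenbaumStage Γ Δ τ) :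
    ∃ Δ' τ', IsMaximalLindenbaumStage Γ Δ' τ' := by
  obtain ⟨⟨Δ', τ'⟩, -, hmax⟩ :=
    zorn_le_nonempty₀ {s : Set _ × Set _ | IsLindenbaumStage Γ s.1 s.2}
      (fun c hcS hc s hs => ⟨(⋃ s ∈ c, s.1, ⋃ s ∈ c, s.2), .iUnion hc ⟨s, hs⟩ hcS,
        fun t ht => ⟨Set.subset_biUnion_of_mem (u := Prod.fst) ht,
          Set.subset_biUnion_of_mem (u := Prod.snd) ht⟩⟩) (Δ, τ) h
  exact ⟨Δ', τ', hmax.prop,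
    fun Δ'' τ'' hs hΔ hτ => hmax.le_of_ge (y := (Δ'', τ'')) hs ⟨hΔ, hτ⟩⟩

namespace IsMaximalLindenbaumStage

theorem exists_var_mem [Fintype Ag] (h : IsMaximalLindenbaumStage Γ Δ τ) (x : Xv) :
    ∃ c, (Sum.inl x, c) ∈ τ := by
  by_contra! hx
  have hs := h.isLindenbaumStage
  obtain ⟨a, ha⟩ := hs.prefixConsistent.exists_insert_pair hs.wf hs.injOn (Sum.inl x)
  exact hx a ((h.maximal _ _ (hs.insert_var hx ha) subset_rfl (Set.subset_insert _ _)).2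
    (Set.mem_insert _ _))

theorem mem_or_neg_mem (h : IsMaximalLindenbaumStage Γ Δ τ) {φ : Formula Ag (Xv ⊕ Ag) Pr}
    (hφ : Wf φ) (hFV : ↑(FV φ) ⊆ FVset Δ) : φ ∈ Δ ∨ neg φ ∈ Δ := by
  have hs := h.isLindenbaumStage
  refine (hs.prefixConsistent.insert_or_insert_neg hs.wf hs.injOn hφ).imp (fun hc => ?_)
    (fun hc => ?_)
  · exact (h.maximal _ _ (hs.insert_formula hφ hFV hc)
      (Set.subset_insert _ _) subset_rfl).1 (Set.mem_insert _ _)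
  · exact (h.maximal _ _ (hs.insert_formula (φ := neg φ) hφ hFV hc)
      (Set.subset_insert _ _) subset_rfl).1 (Set.mem_insert _ _)

theorem name_mem_FVset (h : IsMaximalLindenbaumStage Γ Δ τ) {z : Xv ⊕ Ag} {b : Ag}
    (hdia : dia z b top ∈ Δ) : Sum.inr b ∈ FVset Δ := by
  by_contra hb
  have hs := h.isLindenbaumStage
  have hc := (hs.prefixConsistent.insert_pair_of_dia_top_mem hs.wf hdia fun ψ hψ hbψ =>
    hb (mem_FVset.2 ⟨ψ, hψ, hbψ⟩)).insert_of_LEL hs.wf (LEL.know_top {Sum.inr b})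
  have hK := (h.maximal _ _ (hs.insert_name hb hc)
    (Set.subset_insert _ _) (Set.subset_insert _ _)).1 (Set.mem_insert _ _)
  exact hb (mem_FVset.2 ⟨_, hK, by simp [FV]⟩)

end IsMaximalLindenbaumStage

end Lindenbaum

theorem lindenbaum_coherent_general
    {Ag Xv Pr : Type} [Fintype Ag] [DecidableEq Ag]
    [DecidableEq Xv]
    (Γ : Set (Formula Ag (Xv ⊕ Ag) Pr)) (hwf : ∀ φ ∈ Γ, Formula.Wf φ)
    (hcon : Consistent Γ)
    (hfree : ∀ φ ∈ Γ, ∀ a : Ag, (Sum.inr a : Xv ⊕ Ag) ∉ Formula.FV φ) :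
    ∃ (Δ : Set (Formula Ag (Xv ⊕ Ag) Pr)) (σ : (Xv ⊕ Ag) → Ag),
      Γ ⊆ Δ ∧ FVMCS Δ ∧ Coherent Δ σ := by
  obtain ⟨Δ, τ, h⟩ := exists_isMaximalLindenbaumStage (isLindenbaumStage_self hwf hcon hfree)
  have hs := h.isLindenbaumStage
  choose σ hσ using h.exists_var_mem
  have hστ : ∀ z ∈ FVset Δ, (z, Sum.elim σ id z) ∈ τ := by
    rintro (x | a) hz
    exacts [hσ x, (hs.name_mem_iff a a).2 ⟨rfl, hz⟩]
  refine ⟨Δ, Sum.elim σ id, hs.subset, ⟨hs.wf, hs.prefixConsistent.consistent,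
    fun φ hφ hFV => h.mem_or_neg_mem hφ hFV⟩, fun a _ => rfl, fun z hz l hl => ?_,
    fun z b => h.name_mem_FVset⟩
  exact hs.prefixConsistent l hl [(z, Sum.elim σ id z)] (by simpa using hστ z hz) (by simp)

/-- Lindenbaum-type extension lemma. Every consistent set of
`L_𝐀`-formulas in which no agent name occurs free extends to an FV-maximal
consistent set that is coherent with some assignment. -/
theorem lindenbaum_coherent
    {Ag Xv Pr : Type} [Fintype Ag] [Nonempty Ag] [DecidableEq Ag]
    [DecidableEq Xv] [Countable Xv] [Infinite Xv] [Countable Pr]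
    (Γ : Set (Formula Ag (Xv ⊕ Ag) Pr)) (hwf : ∀ φ ∈ Γ, Formula.Wf φ)
    (hcon : Consistent Γ)
    (hfree : ∀ φ ∈ Γ, ∀ a : Ag, (Sum.inr a : Xv ⊕ Ag) ∉ Formula.FV φ) :
    ∃ (Δ : Set (Formula Ag (Xv ⊕ Ag) Pr)) (σ : (Xv ⊕ Ag) → Ag),
      Γ ⊆ Δ ∧ FVMCS Δ ∧ Coherent Δ σ :=
  lindenbaum_coherent_general Γ hwf hcon hfree

end SimplicialEpistemic
end
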